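/- arXiv:1611.00622 — 2 statements merged into one kernel-verified Lean document; each statement's English description precedes it below -/
import Mathlib

section
/- Let f ∈ SL^∞ and for each m let r_m^{(θ)} = Σ_{I ∈ 𝒟_m} θ_I h_I with |θ_I| ≤ 1. Then for any finite M, (Σ_{m=1}^M |⟨f, r_m^{(θ)}⟩|²)^{1/2} ≤ ‖f‖_{SL^∞}. Consequently sup over choices of coefficients c with ‖c‖_∞ ≤ 1 of |⟨f, r_m^{(c)}⟩| tends to 0 as m → ∞. -/
/- Setup: dyadic intervals on [0,1), L^∞-normalized Haar coefficients, the SL^∞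
square-function norm, the dyadic H^1 norm, and the L² pairing, all expressed on
the space `Dy → ℝ` of Haar coefficient sequences. -/

open MeasureTheory Filter ENNReal

noncomputable section

/-- Dyadic intervals, encoded as pairs (n, k) with k < 2^n. -/
abbrev Dy := {p : ℕ × ℕ // p.2 < 2 ^ p.1}

/-- The level (frequency) of a dyadic interval. -/
def dlev (I : Dy) : ℕ := I.val.1

/-- The dyadic interval [k/2^n, (k+1)/2^n) as a subset of ℝ. -/
def dint (I : Dy) : Set ℝ :=
  Set.Ico ((I.val.2 : ℝ) / 2 ^ I.val.1) ((I.val.2 + 1 : ℝ) / 2 ^ I.val.1)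

/-- The length |I| = 2^{-n} of a dyadic interval. -/
def dlen (I : Dy) : ℝ := ((2 : ℝ) ^ I.val.1)⁻¹

/-- The square function (Σ_I a_I² 1_I(x)) of the Haar series with coefficients `a`. -/
def sqFn (a : Dy → ℝ) (x : ℝ) : ℝ≥0∞ :=
  ∑' I : Dy, Set.indicator (dint I) (fun _ => ENNReal.ofReal ((a I) ^ 2)) x

/-- The SL^∞ norm: ‖Σ a_I h_I‖ = sup_x (Σ a_I² 1_I(x))^{1/2}. -/
def slNorm (a : Dy → ℝ) : ℝ≥0∞ := ⨆ x : ℝ, sqFn a x ^ (1 / 2 : ℝ)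

/-- The dyadic H^1 norm: ∫₀¹ (Σ a_I² 1_I(x))^{1/2} dx. -/
def h1Norm (a : Dy → ℝ) : ℝ≥0∞ := ∫⁻ x in Set.Ico (0 : ℝ) 1, sqFn a x ^ (1 / 2 : ℝ)

/-- The L² pairing ⟨f, g⟩ = Σ_I a_I b_I |I| of two Haar series. -/
def pairing (a b : Dy → ℝ) : ℝ := ∑' I : Dy, a I * b I * dlen I


/-- The Rademacher-type function r_m^{(c)} = Σ_{I ∈ 𝒟_m} c_I h_I (its Haar coefficients). -/
def radem (c : Dy → ℝ) (m : ℕ) : Dy → ℝ := fun I => if dlev I = m then c I else 0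

/-
Since |θ_I| ≤ 1, Cauchy–Schwarz on the level 𝒟_m, whose lengths |I| sum to 1, gives
|⟨f, r_m^{(θ)}⟩|² ≤ Σ_{I ∈ 𝒟_m} a_I² |I|. These level energies are the integrals over [0,1) of
the level pieces of the square function, so their sum over distinct levels is at most
∫₀¹ S(f)² ≤ ‖f‖²_{SL^∞}. The bound is uniform in θ, and the level energies are summable, hence
tend to 0, which gives the second claim.
-/

def dyadicLevel (m : ℕ) : Finset Dy := (({m} : Finset ℕ) ×ˢ Finset.range (2 ^ m)).subtype _

lemma mem_dyadicLevel {m : ℕ} {I : Dy} : I ∈ dyadicLevel m ↔ dlev I = m := by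
  obtain ⟨⟨n, k⟩, hk⟩ := I
  simp only [dyadicLevel, Finset.mem_subtype, Finset.mem_product, Finset.mem_singleton,
    Finset.mem_range, dlev]
  constructor
  · rintro ⟨rfl, -⟩
    rfl
  · rintro rfl
    exact ⟨rfl, hk⟩

lemma card_dyadicLevel (m : ℕ) : (dyadicLevel m).card = 2 ^ m := by
  rw [dyadicLevel, Finset.card_subtype, Finset.filter_true_of_mem fun p hp => ?_]
  · simp
  · simp only [Finset.mem_product, Finset.mem_singleton, Finset.mem_range] at hp
    exact hp.1 ▸ hp.2

lemma dlen_of_mem_dyadicLevel {m : ℕ} {I : Dy} (hI : I ∈ dyadicLevel m) :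
    dlen I = ((2 : ℝ) ^ m)⁻¹ := by
  rw [dlen, ← mem_dyadicLevel.1 hI, dlev]

lemma dlen_nonneg (I : Dy) : 0 ≤ dlen I := inv_nonneg.2 (by positivity)

lemma pairing_radem (a c : Dy → ℝ) (m : ℕ) :
    pairing a (radem c m) = (∑ I ∈ dyadicLevel m, a I * c I) * ((2 : ℝ) ^ m)⁻¹ := by
  rw [pairing, tsum_eq_sum (s := dyadicLevel m) fun I hI => ?_, Finset.sum_mul]
  · refine Finset.sum_congr rfl fun I hI => ?_
    rw [radem, if_pos (mem_dyadicLevel.1 hI), dlen_of_mem_dyadicLevel hI]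
  · rw [radem, if_neg (mt mem_dyadicLevel.2 hI), mul_zero, zero_mul]

/-- `‖Δ_m f‖₂²`, the squared L² norm of the level-`m` part of the Haar series `a`. -/
def levelEnergy (a : Dy → ℝ) (m : ℕ) : ℝ := ∑ I ∈ dyadicLevel m, a I ^ 2 * dlen I

lemma levelEnergy_nonneg (a : Dy → ℝ) (m : ℕ) : 0 ≤ levelEnergy a m :=
  Finset.sum_nonneg fun I _ => mul_nonneg (sq_nonneg _) (dlen_nonneg I)

lemma sq_pairing_radem_le_levelEnergy (a c : Dy → ℝ) (hc : ∀ I, |c I| ≤ 1) (m : ℕ) :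
    pairing a (radem c m) ^ 2 ≤ levelEnergy a m := by
  have hcs : (∑ I ∈ dyadicLevel m, a I * c I) ^ 2
      ≤ 2 ^ m * ∑ I ∈ dyadicLevel m, a I ^ 2 := by
    refine sq_sum_le_card_mul_sum_sq.trans ?_
    rw [card_dyadicLevel]
    push_cast
    gcongr 2 ^ m * ?_
    refine Finset.sum_le_sum fun I _ => ?_
    rw [mul_pow]
    exact mul_le_of_le_one_right (sq_nonneg _) (sq_le_one_iff_abs_le_one _ |>.2 (hc I))
  have hlev : levelEnergy a m = (∑ I ∈ dyadicLevel m, a I ^ 2) * ((2 : ℝ) ^ m)⁻¹ := by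
    rw [levelEnergy, Finset.sum_mul]
    exact Finset.sum_congr rfl fun I hI => by rw [dlen_of_mem_dyadicLevel hI]
  rw [pairing_radem, hlev, mul_pow]
  calc _ ≤ 2 ^ m * (∑ I ∈ dyadicLevel m, a I ^ 2) * ((2 : ℝ) ^ m)⁻¹ ^ 2 := by gcongr
    _ = _ := by field_simp

lemma volume_dint (I : Dy) : volume (dint I) = ENNReal.ofReal (dlen I) := by
  rw [dint, Real.volume_Ico, dlen]
  congr 1
  field_simp
  ring

lemma measurableSet_dint (I : Dy) : MeasurableSet (dint I) := measurableSet_Ico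

lemma dint_subset_Ico (I : Dy) : dint I ⊆ Set.Ico 0 1 := by
  refine Set.Ico_subset_Ico (by positivity) ?_
  rw [div_le_one (by positivity)]
  exact_mod_cast I.prop

lemma sqFn_le_slNorm_sq (a : Dy → ℝ) (x : ℝ) : sqFn a x ≤ slNorm a ^ 2 := by
  have h : sqFn a x ^ (1 / 2 : ℝ) ≤ slNorm a := le_iSup (fun x => sqFn a x ^ (1 / 2 : ℝ)) x
  calc sqFn a x = (sqFn a x ^ (1 / 2 : ℝ)) ^ 2 := by
        rw [← ENNReal.rpow_natCast, ← ENNReal.rpow_mul]; norm_num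
    _ ≤ slNorm a ^ 2 := by gcongr

/-- The left side is `∫₀¹` of a partial sum of the square function: `‖f‖₂ ≤ ‖f‖_{SL^∞}`. -/
lemma sum_sq_mul_dlen_le_slNorm_sq (a : Dy → ℝ) (F : Finset Dy) :
    ∑ I ∈ F, ENNReal.ofReal (a I ^ 2) * ENNReal.ofReal (dlen I) ≤ slNorm a ^ 2 :=
  calc ∑ I ∈ F, ENNReal.ofReal (a I ^ 2) * ENNReal.ofReal (dlen I)
      = ∫⁻ x in Set.Ico 0 1, ∑ I ∈ F, (dint I).indicator (fun _ => ENNReal.ofReal (a I ^ 2)) x := by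
        rw [lintegral_finsetSum _ fun I _ => measurable_const.indicator (measurableSet_dint I)]
        refine Finset.sum_congr rfl fun I _ => ?_
        rw [lintegral_indicator_const (measurableSet_dint I),
          Measure.restrict_apply (measurableSet_dint I), Set.inter_eq_left.2 (dint_subset_Ico I),
          volume_dint]
    _ ≤ ∫⁻ _ in Set.Ico (0 : ℝ) 1, slNorm a ^ 2 :=
        lintegral_mono fun x => (ENNReal.sum_le_tsum F).trans (sqFn_le_slNorm_sq a x)
    _ = slNorm a ^ 2 := by simp

lemma sum_levelEnergy_le (a : Dy → ℝ) (ha : slNorm a ≠ ⊤) (s : Finset ℕ) :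
    ∑ m ∈ s, levelEnergy a m ≤ (slNorm a).toReal ^ 2 := by
  have hdisj : (s : Set ℕ).PairwiseDisjoint dyadicLevel := fun m _ m' _ hne =>
    Finset.disjoint_left.2 fun I hm hm' =>
      hne ((mem_dyadicLevel.1 hm).symm.trans (mem_dyadicLevel.1 hm'))
  have hsum : ∑ m ∈ s, levelEnergy a m = ∑ I ∈ s.biUnion dyadicLevel, a I ^ 2 * dlen I := by
    rw [Finset.sum_biUnion hdisj]
    rfl
  rw [hsum, ← ENNReal.toReal_pow, ← ENNReal.ofReal_le_iff_le_toReal (ENNReal.pow_ne_top ha),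
    ENNReal.ofReal_sum_of_nonneg fun I _ => mul_nonneg (sq_nonneg _) (dlen_nonneg I)]
  simp_rw [ENNReal.ofReal_mul (sq_nonneg _)]
  exact sum_sq_mul_dlen_le_slNorm_sq a _

lemma tendsto_levelEnergy_atTop (a : Dy → ℝ) (ha : slNorm a ≠ ⊤) :
    Tendsto (levelEnergy a) atTop (nhds 0) :=
  (summable_of_sum_range_le (levelEnergy_nonneg a) fun _ =>
    sum_levelEnergy_le a ha _).tendsto_atTop_zero

/-- for f ∈ SL^∞ and coefficients θ with |θ_I| ≤ 1,
(Σ_{m=1}^M |⟨f, r_m^{(θ)}⟩|²)^{1/2} ≤ ‖f‖_{SL^∞}; consequently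
sup_{‖c‖_∞ ≤ 1} |⟨f, r_m^{(c)}⟩| → 0 as m → ∞. -/
theorem rademacher_pairing_sq_sum_le (a : Dy → ℝ) (ha : slNorm a ≠ ⊤)
    (θ : ℕ → Dy → ℝ) (hθ : ∀ m I, |θ m I| ≤ 1) :
    (∀ M : ℕ,
      Real.sqrt (∑ m ∈ Finset.Icc 1 M, (pairing a (radem (θ m) m)) ^ 2)
        ≤ (slNorm a).toReal) ∧
    Filter.Tendsto
      (fun m => ⨆ c : {c : Dy → ℝ // ∀ I, |c I| ≤ 1}, |pairing a (radem c.val m)|)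
      Filter.atTop (nhds 0) := by
  refine ⟨fun M => Real.sqrt_le_iff.2 ⟨ENNReal.toReal_nonneg, ?_⟩, ?_⟩
  · exact (Finset.sum_le_sum fun m _ => sq_pairing_radem_le_levelEnergy a _ (hθ m) m).trans
      (sum_levelEnergy_le a ha _)
  · have hsqrt : Tendsto (fun m => Real.sqrt (levelEnergy a m)) atTop (nhds 0) := by
      simpa using (tendsto_levelEnergy_atTop a ha).sqrt
    refine tendsto_of_tendsto_of_tendsto_of_le_of_le tendsto_const_nhds hsqrt
      (fun m => Real.iSup_nonneg fun c => abs_nonneg _)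
      (fun m => Real.iSup_le (fun c => ?_) (Real.sqrt_nonneg _))
    exact Real.abs_le_sqrt (sq_pairing_radem_le_levelEnergy a c.val c.prop m)

end
end

section
/- Let (ℬ_I : I ∈ ℐ) satisfy Jones' conditions (J1)–(J4) with ℬ_I ⊂ 𝒟, and define the block basis b_I = Σ_{K∈ℬ_I} h_K. Then the operator B : SL^∞ → SL^∞, B f = Σ_{I∈ℐ} (⟨f, h_I⟩/‖h_I‖₂²) b_I, satisfies ‖B f‖_{SL^∞} ≤ ‖f‖_{SL^∞} for all f ∈ SL^∞. -/
/- Setup: dyadic intervals on [0,1), L^∞-normalized Haar coefficients, the SL^∞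
square-function norm, the dyadic H^1 norm, and the L² pairing, all expressed on
the space `Dy → ℝ` of Haar coefficient sequences. -/

open MeasureTheory Filter ENNReal

noncomputable section

open scoped ENNReal

/-- The set B_I = ⋃_{K ∈ ℬ_I} K for a collection ℬ_I of dyadic intervals. -/
def unionBD (ℬ : Dy → Set Dy) (I : Dy) : Set ℝ := ⋃ K ∈ ℬ I, dint K

/-- Jones' compatibility conditions (J1)–(J4) with constant κ for a family
(ℬ_I : I ∈ ℐ) of collections of dyadic intervals. -/
def JonesD (κ : ℝ≥0∞) (ℐ : Set Dy) (ℬ : Dy → Set Dy) : Prop :=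
  -- (J1): finitely many building blocks (dyadic intervals are automatically
  -- measurable, nested and of positive measure).
  (Set.Finite (⋃ I ∈ ℐ, ℬ I)) ∧
  -- (J2): each ℬ_I is nonempty with pairwise disjoint members; distinct
  -- collections are disjoint.
  (∀ I ∈ ℐ, (ℬ I).Nonempty) ∧
  (∀ I ∈ ℐ, (ℬ I).Pairwise fun K K' => Disjoint (dint K) (dint K')) ∧
  (∀ I₀ ∈ ℐ, ∀ I₁ ∈ ℐ, I₀ ≠ I₁ → Disjoint (ℬ I₀) (ℬ I₁)) ∧
  -- (J3):
  (∀ I₀ ∈ ℐ, ∀ I₁ ∈ ℐ, Disjoint (dint I₀) (dint I₁) →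
    Disjoint (unionBD ℬ I₀) (unionBD ℬ I₁)) ∧
  (∀ I₀ ∈ ℐ, ∀ I₁ ∈ ℐ, dint I₀ ⊆ dint I₁ → unionBD ℬ I₀ ⊆ unionBD ℬ I₁) ∧
  -- (J4):
  (∀ I₀ ∈ ℐ, ∀ I ∈ ℐ, dint I₀ ⊆ dint I → ∀ K ∈ ℬ I,
    κ⁻¹ * (MeasureTheory.volume (unionBD ℬ I₀) / MeasureTheory.volume (unionBD ℬ I))
      ≤ MeasureTheory.volume (dint K ∩ unionBD ℬ I₀) / MeasureTheory.volume (dint K))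

/-- The Haar coefficients of B f = Σ_{I ∈ ℐ} (⟨f, h_I⟩/‖h_I‖₂²) b_I, where
b_I = Σ_{K ∈ ℬ_I} h_K: the coefficient of h_K is a_I for the (unique) I ∈ ℐ
with K ∈ ℬ_I. -/
def Bop (ℐ : Set Dy) (ℬ : Dy → Set Dy) (a : Dy → ℝ) : Dy → ℝ :=
  fun K => ∑' I : {I : Dy // I ∈ ℐ ∧ K ∈ ℬ I}, a I.val

/-- The Haar coefficients of Q f = Σ_{I ∈ ℐ} (⟨f, b_I⟩/‖b_I‖₂²) h_I:
the coefficient of h_I (I ∈ ℐ) is (Σ_{K ∈ ℬ_I} a_K |K|) / (Σ_{K ∈ ℬ_I} |K|). -/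
def Qop (ℐ : Set Dy) (ℬ : Dy → Set Dy) (a : Dy → ℝ) : Dy → ℝ :=
  fun I => Set.indicator ℐ
    (fun _ => (∑' K : ℬ I, a K.val * dlen K.val) / (∑' K : ℬ I, dlen K.val)) I

/-! Fix `x`. By (J2), every block `K ∋ x` carrying a nonzero coefficient of `B f` lies in exactly
one `ℬ_I`, where its coefficient is `a_I`, and distinct such blocks give distinct `I` with
`x ∈ B_I`; so the square function of `B f` at `x` is at most `∑_{x ∈ B_I} a_I²`. By (J3) these
`I` pairwise intersect, so they form a chain of dyadic intervals, and any finite part of the chain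
has a common point `y` (a point of its finest member). Each partial sum is therefore bounded by
the square function of `f` at some `y`. -/

lemma mem_dint_iff {I : Dy} {x : ℝ} : x ∈ dint I ↔ ⌊x * 2 ^ dlev I⌋ = I.val.2 := by
  have h2 : (0 : ℝ) < 2 ^ dlev I := by positivity
  rw [Int.floor_eq_iff, dint, Set.mem_Ico, ← dlev, div_le_iff₀ h2, lt_div_iff₀ h2]
  norm_cast

lemma dint_nonempty (I : Dy) : (dint I).Nonempty :=
  ⟨I.val.2 / 2 ^ dlev I, mem_dint_iff.2 <| by simp⟩

lemma floor_mul_two_pow_eq_div_of_le {m n : ℕ} (h : m ≤ n) (x : ℝ) :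
    ⌊x * 2 ^ m⌋ = ⌊x * 2 ^ n⌋ / 2 ^ (n - m) := by
  have hx : x * 2 ^ m = x * 2 ^ n / ((2 ^ (n - m) : ℕ) : ℝ) := by
    rw [Nat.cast_pow, Nat.cast_ofNat, ← Nat.add_sub_cancel' h, pow_add, Nat.add_sub_cancel_left]
    field_simp
  rw [hx, Int.floor_div_natCast]
  norm_cast

lemma dint_subset_of_dlev_le {I J : Dy} (h : dlev J ≤ dlev I)
    (hIJ : (dint I ∩ dint J).Nonempty) : dint I ⊆ dint J := by
  obtain ⟨x, hxI, hxJ⟩ := hIJ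
  intro z hz
  rw [mem_dint_iff] at hxI hxJ hz ⊢
  rw [floor_mul_two_pow_eq_div_of_le h, hz, ← hxI, ← floor_mul_two_pow_eq_div_of_le h, hxJ]

lemma exists_forall_mem_dint_of_pairwise {s : Finset Dy}
    (hs : (s : Set Dy).Pairwise fun I J => (dint I ∩ dint J).Nonempty) :
    ∃ y, ∀ I ∈ s, y ∈ dint I := by
  rcases s.eq_empty_or_nonempty with rfl | hne
  · simp
  obtain ⟨I, hI, hmax⟩ := s.exists_max_image dlev hne
  obtain ⟨y, hy⟩ := dint_nonempty I
  refine ⟨y, fun J hJ => ?_⟩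
  obtain rfl | hIJ := eq_or_ne I J
  · exact hy
  · exact dint_subset_of_dlev_le (hmax J hJ) (hs hI hJ hIJ) hy

lemma tsum_ofReal_sq_le_iSup_sqFn {S : Set Dy}
    (hS : S.Pairwise fun I J => (dint I ∩ dint J).Nonempty) (a : Dy → ℝ) :
    ∑' I : S, ENNReal.ofReal (a I ^ 2) ≤ ⨆ y, sqFn a y := by
  rw [ENNReal.tsum_eq_iSup_sum]
  refine iSup_le fun s => ?_
  obtain ⟨y, hy⟩ := exists_forall_mem_dint_of_pairwise (s := s.map (Function.Embedding.subtype _))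
    (by simpa using hS.mono (by simp))
  calc ∑ I ∈ s, ENNReal.ofReal (a I ^ 2)
      = ∑ I ∈ s, (dint I).indicator (fun _ => ENNReal.ofReal (a I ^ 2)) y :=
        Finset.sum_congr rfl fun I hI => by rw [Set.indicator_of_mem (hy I (by simpa using hI))]
    _ ≤ ∑' I : S, (dint I).indicator (fun _ => ENNReal.ofReal (a I ^ 2)) y := ENNReal.sum_le_tsum s
    _ ≤ sqFn a y := ENNReal.tsum_comp_le_tsum_of_injective Subtype.val_injective _
    _ ≤ ⨆ y, sqFn a y := le_iSup (sqFn a) y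

lemma slNorm_le_of_forall_sqFn_le {a b : Dy → ℝ} (h : ∀ x, sqFn b x ≤ ⨆ y, sqFn a y) :
    slNorm b ≤ slNorm a := by
  have hsqrt : (⨆ y, sqFn a y) ^ (1 / 2 : ℝ) = slNorm a :=
    (ENNReal.orderIsoRpow (1 / 2) (by norm_num)).map_iSup _
  exact iSup_le fun x => hsqrt ▸ ENNReal.rpow_le_rpow (h x) (by norm_num)

section Bop

variable {ℐ : Set Dy} {ℬ : Dy → Set Dy}

lemma Bop_apply_of_mem (hcd : ∀ I₀ ∈ ℐ, ∀ I₁ ∈ ℐ, I₀ ≠ I₁ → Disjoint (ℬ I₀) (ℬ I₁))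
    (a : Dy → ℝ) {I K : Dy} (hI : I ∈ ℐ) (hK : K ∈ ℬ I) : Bop ℐ ℬ a K = a I := by
  have huniq : ∀ J : {J : Dy // J ∈ ℐ ∧ K ∈ ℬ J}, J = ⟨I, hI, hK⟩ := fun ⟨J, hJ, hKJ⟩ =>
    Subtype.ext <| by_contra fun hne => Set.disjoint_left.mp (hcd J hJ I hI hne) hKJ hK
  exact tsum_eq_single _ fun J hJ => absurd (huniq J) hJ

lemma Bop_apply_eq_zero (a : Dy → ℝ) {K : Dy} (hK : ∀ I ∈ ℐ, K ∉ ℬ I) : Bop ℐ ℬ a K = 0 :=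
  have : IsEmpty {I : Dy // I ∈ ℐ ∧ K ∈ ℬ I} := ⟨fun I => hK I.1 I.2.1 I.2.2⟩
  tsum_empty

lemma sqFn_Bop_le (hpd : ∀ I ∈ ℐ, (ℬ I).Pairwise fun K K' => Disjoint (dint K) (dint K'))
    (hcd : ∀ I₀ ∈ ℐ, ∀ I₁ ∈ ℐ, I₀ ≠ I₁ → Disjoint (ℬ I₀) (ℬ I₁)) (a : Dy → ℝ) (x : ℝ) :
    sqFn (Bop ℐ ℬ a) x ≤ ∑' I : {I | I ∈ ℐ ∧ x ∈ unionBD ℬ I}, ENNReal.ofReal (a I ^ 2) := by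
  set F : Dy → ℝ≥0∞ := fun K => (dint K).indicator (fun _ => ENNReal.ofReal (Bop ℐ ℬ a K ^ 2)) x
  have hparent : ∀ K : Function.support F, ∃ I ∈ ℐ, (K : Dy) ∈ ℬ I ∧ x ∈ dint K := by
    intro ⟨K, hK⟩
    have hx : x ∈ dint K := by_contra fun hx => hK (Set.indicator_of_notMem hx _)
    by_contra! hno
    refine hK ?_
    simp [F, Bop_apply_eq_zero a fun I hI hKI => hno I hI hKI hx]
  choose p hpℐ hpℬ hx using hparent
  let i : Function.support F → {I | I ∈ ℐ ∧ x ∈ unionBD ℬ I} :=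
    fun K => ⟨p K, hpℐ K, Set.mem_biUnion (hpℬ K) (hx K)⟩
  have hi : Function.Injective i := by
    intro K K' hKK'
    have hp : p K = p K' := congrArg Subtype.val hKK'
    by_contra hne
    exact Set.disjoint_left.mp (hpd _ (hpℐ K) (hpℬ K) (hp ▸ hpℬ K') (Subtype.coe_ne_coe.mpr hne))
      (hx K) (hx K')
  calc sqFn (Bop ℐ ℬ a) x = ∑' K : Function.support F, F K := (tsum_subtype_support F).symm
    _ = ∑' K : Function.support F, ENNReal.ofReal (a (i K) ^ 2) := tsum_congr fun K => by
        simp only [F, Set.indicator_of_mem (hx K), Bop_apply_of_mem hcd a (hpℐ K) (hpℬ K), i]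
    _ ≤ _ := ENNReal.tsum_comp_le_tsum_of_injective hi (fun I => ENNReal.ofReal (a I ^ 2))

end Bop

/-- under Jones' conditions, the block-basis operator
B f = Σ_{I∈ℐ} (⟨f,h_I⟩/‖h_I‖₂²) b_I satisfies ‖Bf‖_{SL^∞} ≤ ‖f‖_{SL^∞}. -/
theorem slNorm_Bop_le (κ : ℝ≥0∞) (ℐ : Set Dy) (ℬ : Dy → Set Dy)
    (h : JonesD κ ℐ ℬ) (a : Dy → ℝ) :
    slNorm (Bop ℐ ℬ a) ≤ slNorm a := by
  obtain ⟨-, -, hpd, hcd, hdisj, -, -⟩ := h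
  refine slNorm_le_of_forall_sqFn_le fun x => (sqFn_Bop_le hpd hcd a x).trans ?_
  refine tsum_ofReal_sq_le_iSup_sqFn ?_ a
  rintro I ⟨hI, hxI⟩ J ⟨hJ, hxJ⟩ -
  exact Set.not_disjoint_iff_nonempty_inter.mp fun hd =>
    Set.disjoint_left.mp (hdisj I hI J hJ hd) hxI hxJ

end
end
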